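/- arXiv:2407.16072 — 3 statements merged into one kernel-verified Lean document; each statement's English description precedes it below -/
import Mathlib

section
/- Let d be a positive integer with gcd(d, p^n − 1) = 1. Then ∑_{τ=0}^{p^n−2} C_d(τ)² = p^{2n} − p^n − 1, where C_d(τ) = ∑_{t=0}^{p^n−2} ω^{Tr(α^{t+τ}) − Tr(α^{dt})}. -/
noncomputable instance (p n : ℕ) [Fact p.Prime] : Fintype (GaloisField p n) :=
  Fintype.ofFinite _

/-- `ω = exp(2πi/p)` raised to (the integer lift of) an element of `F_p`. -/
noncomputable def ew (p : ℕ) (x : ZMod p) : ℂ :=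
  Complex.exp (2 * Real.pi * Complex.I / p) ^ x.val

/-- The absolute trace from `F_{p^n}` to `F_p`. -/
noncomputable def Tr (p n : ℕ) [Fact p.Prime] (x : GaloisField p n) : ZMod p :=
  Algebra.trace (ZMod p) (GaloisField p n) x

/-!
Write `ψ = ω^{Tr(·)}`, a primitive additive character of `F = F_q`, and `u = α^τ`, `x = α^t`, so
that `C_d(τ) = ∑_{x ∈ Fˣ} ψ(u x - x^d)`. Extending the outer sum to all `u ∈ F` and expanding the
square, orthogonality `∑_u ψ(u c) = q [c = 0]` keeps only the pairs `(x, -x)`, on which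
`ψ(-x^d - (-x)^d) = ψ(0) = 1` because `(-x)^d = -x^d`; hence `∑_{u ∈ F} C(u)² = q (q - 1)`.
The term `u = 0` is `(∑_x ψ(-x^d))² = (∑_{x ≠ 0} ψ(x))² = 1`, because `x ↦ -x^d` permutes `Fˣ`.
-/

open Finset AddChar

theorem sum_units_eq_sum_sub {G₀ M : Type*} [GroupWithZero G₀] [Fintype G₀] [DecidableEq G₀]
    [AddCommGroup M] (f : G₀ → M) : ∑ u : G₀ˣ, f u = ∑ x, f x - f 0 := by
  rw [Fintype.sum_equiv unitsEquivNeZero (fun u : G₀ˣ => f u) (fun x : {x : G₀ // x ≠ 0} => f x)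
      fun _ => rfl, ← sum_subtype (univ.erase 0) (by simp) f, ← add_sum_erase univ f (mem_univ 0)]
  abel

theorem sum_range_orderOf_pow {G M : Type*} [Group G] [Fintype G] [AddCommMonoid M] {g : G}
    (hg : orderOf g = Fintype.card G) (f : G → M) :
    ∑ t ∈ range (orderOf g), f (g ^ t) = ∑ x, f x := by
  classical
  have hinj : Set.InjOn (g ^ ·) (range (orderOf g)) := by
    simpa [Set.Iio] using pow_injOn_Iio_orderOf (x := g)
  rw [← sum_image hinj]
  congr
  apply eq_univ_of_card
  rw [card_image_of_injOn hinj, card_range, hg]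

theorem Units.neg_pow_of_coprime {K : Type*} [CommRing K] [NoZeroDivisors K] {d : ℕ} (hd : (Nat.card Kˣ).Coprime d)
    (x : Kˣ) : (-x) ^ d = -x ^ d := by
  suffices h : (-1 : Kˣ) ^ d = -1 by rw [neg_pow, h, neg_one_mul]
  -- If `(-1)^d = 1 = 1^d`, injectivity of `(·)^d` forces `-1 = 1`.
  have hsq : ((-1 : Kˣ) ^ d) ^ 2 = 1 ^ 2 := by
    rw [← pow_mul, pow_mul', neg_one_sq, one_pow, one_pow]
  rcases Units.eq_or_eq_neg_of_sq_eq_sq _ _ hsq with h | h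
  · have h1 : (-1 : Kˣ) = 1 := hd.pow_left_bijective.injective (by simpa using h)
    rw [h, h1]
  · exact h

namespace AddChar

variable {F R : Type*} [Field F] [Fintype F] [DecidableEq F] [CommRing R] [IsDomain R]
  {ψ : AddChar F R}

theorem sum_units_eq_neg_one (hψ : ψ ≠ 1) : ∑ u : Fˣ, ψ u = -1 := by
  rw [sum_units_eq_sum_sub (ψ ·), sum_eq_zero_of_ne_one hψ, map_zero_eq_one, zero_sub]

theorem sum_sq_sum_units_mul_add (hψ : ψ.IsPrimitive) (f : Fˣ → F) :
    ∑ y : F, (∑ x : Fˣ, ψ (y * x + f x)) ^ 2 = Fintype.card F * ∑ x : Fˣ, ψ (f x + f (-x)) := by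
  have hsplit (y : F) (x x' : Fˣ) :
      ψ (y * x + f x) * ψ (y * x' + f x') = ψ (f x + f x') * ψ (y * (x + x' : F)) := by
    rw [← map_add_eq_mul, ← map_add_eq_mul]; ring_nf
  have horth (x x' : Fˣ) :
      ∑ y : F, ψ (y * (x + x' : F)) = if x' = -x then (Fintype.card F : R) else 0 := by
    have hzero : (x + x' : F) = 0 ↔ x' = -x := by
      rw [add_eq_zero_iff_eq_neg', ← Units.val_neg, Units.val_inj]
    simp only [sum_mulShift _ hψ, hzero, Nat.cast_ite, Nat.cast_zero]
  simp_rw [sq, sum_mul_sum, hsplit]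
  rw [sum_comm, mul_sum]
  refine sum_congr rfl fun x _ => ?_
  rw [sum_comm]
  simp_rw [← mul_sum, horth, mul_ite, mul_zero, sum_ite_eq', mem_univ, if_true, mul_comm]

theorem sum_units_sq_sum_units_mul_sub_pow (hψ : ψ.IsPrimitive) {d : ℕ}
    (hd : (Nat.card Fˣ).Coprime d) :
    ∑ y : Fˣ, (∑ x : Fˣ, ψ (y * x - ↑(x ^ d))) ^ 2
      = (Fintype.card F : R) ^ 2 - Fintype.card F - 1 := by
  set S : F → R := fun y => ∑ x : Fˣ, ψ (y * x + -↑(x ^ d))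
  have hS0 : S 0 = -1 := by
    have hψ1 : ψ ≠ 1 := fun h => hψ one_ne_zero (by rw [mulShift_one, h])
    simp only [S, zero_mul, zero_add, ← Units.val_neg]
    rw [← sum_units_eq_neg_one hψ1]
    exact Fintype.sum_equiv ((powCoprime hd).trans (Equiv.neg _)) _ _ fun _ => rfl
  have hsum : ∑ y : F, S y ^ 2 = Fintype.card F * (Fintype.card F - 1) := by
    have hpair (x : Fˣ) : -(↑(x ^ d) : F) + -↑((-x) ^ d) = 0 := by
      rw [Units.neg_pow_of_coprime hd, Units.val_neg, neg_neg, neg_add_cancel]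
    rw [sum_sq_sum_units_mul_add hψ]
    simp only [hpair, map_zero_eq_one]
    rw [sum_units_eq_sum_sub (fun _ : F => (1 : R)), sum_const, card_univ, nsmul_one]
  calc ∑ y : Fˣ, (∑ x : Fˣ, ψ (y * x - ↑(x ^ d))) ^ 2 = ∑ y : Fˣ, S y ^ 2 := by
        simp only [S, sub_eq_add_neg]
    _ = ∑ y : F, S y ^ 2 - S 0 ^ 2 := sum_units_eq_sum_sub (S · ^ 2)
    _ = _ := by rw [hsum, hS0]; ring

end AddChar

section TraceCharacter

variable (p n : ℕ) [Fact p.Prime]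

noncomputable def traceChar : AddChar (GaloisField p n) ℂ :=
  (zmodChar p (Complex.isPrimitiveRoot_exp p (Fact.out : p.Prime).ne_zero).pow_eq_one
    ).compAddMonoidHom (Algebra.trace (ZMod p) (GaloisField p n)).toAddMonoidHom

theorem traceChar_apply (x : GaloisField p n) : traceChar p n x = ew p (Tr p n x) := rfl

theorem isPrimitive_traceChar : (traceChar p n).IsPrimitive := by
  have hζ := Complex.isPrimitiveRoot_exp p (Fact.out : p.Prime).ne_zero
  obtain ⟨x, hx⟩ := Algebra.trace_surjective (ZMod p) (GaloisField p n) 1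
  refine IsPrimitive.of_ne_one (ne_one_iff.2 ⟨x, ?_⟩)
  rw [Ne, traceChar, compAddMonoidHom_apply, LinearMap.toAddMonoidHom_coe, hx,
    (zmodChar_primitive_of_primitive_root p hζ).zmod_char_eq_one_iff p]
  exact one_ne_zero

end TraceCharacter

theorem crosscorrelation_second_moment_general (p n : ℕ) [Fact p.Prime] (hn : 1 ≤ n)
    (α : GaloisField p n) (hα : orderOf α = p ^ n - 1)
    (d : ℕ) (hgcd : Nat.gcd d (p ^ n - 1) = 1) :
    ∑ τ ∈ Finset.range (p ^ n - 1),
        (∑ t ∈ Finset.range (p ^ n - 1),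
          ew p (Tr p n (α ^ (t + τ)) - Tr p n (α ^ (d * t)))) ^ 2
      = (p : ℂ) ^ (2 * n) - (p : ℂ) ^ n - 1 := by
  classical
  have hcard : Fintype.card (GaloisField p n) = p ^ n := by
    rw [Fintype.card_eq_nat_card, GaloisField.card p n (by omega)]
  have hα0 : α ≠ 0 := by
    rintro rfl
    have : 1 < p ^ n := Nat.one_lt_pow (by omega) (Fact.out : p.Prime).one_lt
    rw [orderOf_zero] at hα
    omega
  set u := Units.mk0 α hα0
  have hu : orderOf u = p ^ n - 1 := by rw [← orderOf_units, Units.val_mk0, hα]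
  have hu_card : orderOf u = Fintype.card (GaloisField p n)ˣ := by
    rw [hu, Fintype.card_units, hcard]
  have hcop : (Nat.card (GaloisField p n)ˣ).Coprime d := by
    rw [Nat.card_eq_fintype_card, ← hu_card, hu]; exact Nat.coprime_comm.mp hgcd
  have hterm (τ t : ℕ) : ew p (Tr p n (α ^ (t + τ)) - Tr p n (α ^ (d * t)))
      = traceChar p n (↑(u ^ τ) * ↑(u ^ t) - ↑((u ^ t) ^ d)) := by
    rw [traceChar_apply, Tr, Tr, Tr, map_sub]
    simp only [u, Units.val_pow_eq_pow_val, Units.val_mk0]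
    ring_nf
  calc _ = ∑ y : (GaloisField p n)ˣ,
          (∑ x : (GaloisField p n)ˣ, traceChar p n (y * x - ↑(x ^ d))) ^ 2 := by
        simp only [← sum_range_orderOf_pow hu_card, hterm, hu]
    _ = _ := by
      rw [sum_units_sq_sum_units_mul_sub_pow (isPrimitive_traceChar p n) hcop, hcard]
      push_cast
      ring

/-- Second power moment of the crosscorrelation:
`∑_τ C_d(τ)² = p^(2n) - p^n - 1`. -/
theorem crosscorrelation_second_moment (p n : ℕ) [Fact p.Prime] (hn : 1 ≤ n)
    (α : GaloisField p n) (hα : orderOf α = p ^ n - 1)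
    (d : ℕ) (hd : 0 < d) (hgcd : Nat.gcd d (p ^ n - 1) = 1) :
    ∑ τ ∈ Finset.range (p ^ n - 1),
        (∑ t ∈ Finset.range (p ^ n - 1),
          ew p (Tr p n (α ^ (t + τ)) - Tr p n (α ^ (d * t)))) ^ 2
      = (p : ℂ) ^ (2 * n) - (p : ℂ) ^ n - 1 :=
  crosscorrelation_second_moment_general p n hn α hα d hgcd
end

section
/- Let d be coprime to p^n − 1 and W_d(a) = ∑_{x ∈ F_{p^n}} ω^{Tr(x^d − ax)}. Then ∑_{a ∈ F_{p^n}} W_d(a)³ = p^{2n}·M_1 and ∑_{a ∈ F_{p^n}} W_d(a)⁴ = p^{2n} ∑_{a ∈ F_{p^n}} M_a², where M_a = #{x ∈ F_{p^n} : (x+1)^d − x^d = a}. -/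
/-!
Write `q = #F`. Averaging over the scalings `c * x ^ d` (which all have the same moments,
because `x ↦ x ^ d` permutes `Fˣ`) turns the `k`-th moment into a point count:
`(q - 1) ∑ₐ W(a)ᵏ = q² Nₖ - qᵏ`, where `Nₖ` counts the `k`-tuples with `∑ xᵢ = 0` and
`∑ xᵢ ^ d = 0`. Since `x ^ d` is odd, the solutions for `k = 3, 4` fiber over `s = x₁ + x₂`, and
for `s ≠ 0` the substitution `x = -s u` turns `x ^ d + (s - x) ^ d` into
`s ^ d ((u + 1) ^ d - u ^ d)`. This gives `N₃ = q + (q - 1) M₁` and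
`N₄ = q² + (q - 1) ∑ₐ Mₐ²`.
-/

open Finset

namespace AddChar

lemma map_sum_eq_prod {A M : Type*} [AddCommMonoid A] [CommMonoid M] (ψ : AddChar A M)
    {ι : Type*} (s : Finset ι) (g : ι → A) : ψ (∑ i ∈ s, g i) = ∏ i ∈ s, ψ (g i) := by
  induction s using Finset.cons_induction with
  | empty => simp
  | cons i s hi ih => rw [sum_cons, map_add_eq_mul, prod_cons, ih]

lemma IsPrimitive.compTrace {K L R : Type*} [Field K] [Field L] [Algebra K L]
    [FiniteDimensional K L] [Algebra.IsSeparable K L] [CommMonoid R] {χ : AddChar K R}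
    (hχ : χ.IsPrimitive) :
    (χ.compAddMonoidHom (Algebra.trace K L).toAddMonoidHom).IsPrimitive := by
  refine IsPrimitive.of_ne_one (ne_one_iff.mpr ?_)
  obtain ⟨x, hx⟩ := ne_one_iff.mp (by simpa using hχ one_ne_zero)
  obtain ⟨y, rfl⟩ := Algebra.trace_surjective K L x
  exact ⟨y, hx⟩

end AddChar

lemma ew_eq_stdAddChar (p : ℕ) [NeZero p] (x : ZMod p) : ew p x = ZMod.stdAddChar x := by
  rw [ew, ZMod.stdAddChar_apply, ZMod.toCircle_apply, ← Complex.exp_nat_mul]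
  congr 1
  ring

section PowerMap

variable {F : Type*} [Field F] {d : ℕ}

lemma neg_mul_pow_add_sub_pow (hodd : ∀ x : F, (-x) ^ d = -x ^ d) (s u : F) :
    (-s * u) ^ d + (s - -s * u) ^ d = s ^ d * ((u + 1) ^ d - u ^ d) := by
  rw [neg_mul, hodd, show s - -(s * u) = s * (u + 1) by ring, mul_pow, mul_pow]
  ring

variable [Fintype F]

lemma exists_units_pow_eq_of_coprime (hd : d.Coprime (Fintype.card F - 1)) {c : F}
    (hc : c ≠ 0) : ∃ μ : Fˣ, (μ : F) ^ d = c := by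
  classical
  have hcard : (Nat.card Fˣ).Coprime d := by
    rwa [Nat.card_eq_fintype_card, Fintype.card_units, Nat.coprime_comm]
  obtain ⟨μ, hμ⟩ := hcard.pow_left_bijective.surjective (Units.mk0 c hc)
  exact ⟨μ, by simpa using congrArg Units.val hμ⟩

lemma neg_pow_of_coprime (hd : d.Coprime (Fintype.card F - 1)) (x : F) :
    (-x) ^ d = -x ^ d := by
  rcases d.even_or_odd with hev | hodd
  · have hchar : ringChar F = 2 := by
      rw [FiniteField.even_card_iff_char_two]
      by_contra hcard
      have := Nat.eq_one_of_dvd_coprimes hd hev.two_dvd (Nat.dvd_of_mod_eq_zero (by omega))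
      omega
    rw [hev.neg_pow, ← neg_one_mul, neg_one_eq_one_iff.mpr hchar, one_mul]
  · exact hodd.neg_pow x

end PowerMap

lemma card_filter_prod {α β : Type*} [Fintype α] [Fintype β] (P : α → β → Prop)
    [∀ a b, Decidable (P a b)] : #{t : α × β | P t.1 t.2} = ∑ a, #{b | P a b} := by
  simp only [card_filter, Fintype.sum_prod_type]

lemma sum_card_fiber_sq {α β : Type*} [Fintype α] [DecidableEq α] [Fintype β] [DecidableEq β]
    (g : α → β) : ∑ b, #{a | g a = b} ^ 2 = #{w : α × α | g w.1 = g w.2} :=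
  calc ∑ b, #{a | g a = b} ^ 2 = ∑ b, ∑ a with g a = b, #{a' | b = g a'} := by
        refine sum_congr rfl fun b _ => ?_
        simp_rw [sum_const, smul_eq_mul, sq, eq_comm (a := b)]
    _ = ∑ a, #{a' | g a = g a'} := sum_fiberwise' univ g _
    _ = #{w : α × α | g w.1 = g w.2} := (card_filter_prod _).symm

section Tuples

variable {G : Type*} [AddCommGroup G] [Fintype G] [DecidableEq G] (f : G → G)

lemma card_sum_eq_zero_fin_three :
    #{v : Fin 3 → G | ∑ i, v i = 0 ∧ ∑ i, f (v i) = 0} =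
      ∑ s, #{x | f x + f (s - x) + f (-s) = 0} := by
  rw [← card_filter_prod fun s x => f x + f (s - x) + f (-s) = 0]
  refine card_nbij' (fun v => (-v 2, v 0)) (fun t => ![t.2, t.1 - t.2, -t.1]) ?_ ?_ ?_ ?_
  · intro v hv
    simp only [coe_filter, mem_univ, true_and, Set.mem_ofPred_eq, Fin.sum_univ_three] at hv ⊢
    obtain ⟨hsum, hf⟩ := hv
    rw [eq_neg_of_add_eq_zero_right hsum] at hf ⊢
    simpa only [neg_neg, add_sub_cancel_left] using hf
  · intro t ht
    simp only [coe_filter, mem_univ, true_and, Set.mem_ofPred_eq, Fin.sum_univ_three] at ht ⊢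
    simp [ht]
  · intro v hv
    simp only [coe_filter, mem_univ, true_and, Set.mem_ofPred_eq, Fin.sum_univ_three] at hv
    ext i
    fin_cases i <;> simp [eq_neg_of_add_eq_zero_right hv.1]
  · intro t _
    simp

lemma card_sum_eq_zero_fin_four :
    #{v : Fin 4 → G | ∑ i, v i = 0 ∧ ∑ i, f (v i) = 0} =
      ∑ s, #{w : G × G | f w.1 + f (s - w.1) + f (-w.2) + f (-(s - w.2)) = 0} := by
  rw [← card_filter_prod fun s (w : G × G) =>
    f w.1 + f (s - w.1) + f (-w.2) + f (-(s - w.2)) = 0]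
  refine card_nbij' (fun v => (v 0 + v 1, v 0, -v 2))
    (fun t => ![t.2.1, t.1 - t.2.1, -t.2.2, -(t.1 - t.2.2)]) ?_ ?_ ?_ ?_
  · intro v hv
    simp only [coe_filter, mem_univ, true_and, Set.mem_ofPred_eq, Fin.sum_univ_four] at hv ⊢
    obtain ⟨hsum, hf⟩ := hv
    rw [eq_neg_of_add_eq_zero_right hsum] at hf
    simpa only [neg_neg, add_sub_cancel_left, sub_neg_eq_add] using hf
  · intro t ht
    simp only [coe_filter, mem_univ, true_and, Set.mem_ofPred_eq, Fin.sum_univ_four] at ht ⊢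
    exact ⟨by simp only [Matrix.cons_val_zero, Matrix.cons_val_one, Matrix.cons_val]; abel,
      by simpa using ht⟩
  · intro v hv
    simp only [coe_filter, mem_univ, true_and, Set.mem_ofPred_eq, Fin.sum_univ_four] at hv
    ext i
    fin_cases i <;> simp [eq_neg_of_add_eq_zero_right hv.1]
  · intro t _
    simp

end Tuples

section PowerCounts

variable {F : Type*} [Field F] [Fintype F] [DecidableEq F] {d : ℕ}

lemma card_fiber_sum_pow_three (hodd : ∀ x : F, (-x) ^ d = -x ^ d) {s : F} (hs : s ≠ 0) :
    #{x | x ^ d + (s - x) ^ d + (-s) ^ d = 0} = #{u : F | (u + 1) ^ d - u ^ d = 1} := by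
  refine (card_equiv (Equiv.mulLeft₀ (-s) (neg_ne_zero.mpr hs)) fun u => ?_).symm
  simp only [mem_filter, mem_univ, true_and, Equiv.mulLeft₀_apply, neg_mul_pow_add_sub_pow hodd,
    hodd, ← sub_eq_add_neg, sub_eq_zero, mul_eq_left₀ (pow_ne_zero d hs)]

lemma card_sum_eq_zero_pow_fin_three (hd : d ≠ 0) (hodd : ∀ x : F, (-x) ^ d = -x ^ d) :
    #{v : Fin 3 → F | ∑ i, v i = 0 ∧ ∑ i, v i ^ d = 0} =
      Fintype.card F + (Fintype.card F - 1) * #{u : F | (u + 1) ^ d - u ^ d = 1} := by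
  rw [card_sum_eq_zero_fin_three (· ^ d), Fintype.sum_eq_add_sum_compl 0,
    sum_congr rfl fun s hs => card_fiber_sum_pow_three hodd (by simpa using hs), sum_const,
    card_compl, card_singleton, smul_eq_mul]
  congr 1
  rw [filter_true_of_mem fun x _ => by simp [hodd, zero_pow hd], card_univ]

lemma card_fiber_sum_pow_four (hodd : ∀ x : F, (-x) ^ d = -x ^ d) {s : F} (hs : s ≠ 0) :
    #{w : F × F | w.1 ^ d + (s - w.1) ^ d + (-w.2) ^ d + (-(s - w.2)) ^ d = 0} =
      #{w : F × F | (w.1 + 1) ^ d - w.1 ^ d = (w.2 + 1) ^ d - w.2 ^ d} := by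
  let e := Equiv.mulLeft₀ (-s) (neg_ne_zero.mpr hs)
  refine (card_equiv (e.prodCongr e) fun w => ?_).symm
  have regroup : ∀ x z : F, x ^ d + (s - x) ^ d + (-z) ^ d + (-(s - z)) ^ d =
      (x ^ d + (s - x) ^ d) - (z ^ d + (s - z) ^ d) := fun x z => by
    rw [hodd, hodd]
    ring
  simp only [mem_filter, mem_univ, true_and, Equiv.prodCongr_apply, Prod.map_fst, Prod.map_snd, e,
    Equiv.mulLeft₀_apply, regroup, neg_mul_pow_add_sub_pow hodd, sub_eq_zero,
    mul_right_inj' (pow_ne_zero d hs)]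

lemma card_sum_eq_zero_pow_fin_four (hodd : ∀ x : F, (-x) ^ d = -x ^ d) :
    #{v : Fin 4 → F | ∑ i, v i = 0 ∧ ∑ i, v i ^ d = 0} =
      Fintype.card F ^ 2 + (Fintype.card F - 1) *
        #{w : F × F | (w.1 + 1) ^ d - w.1 ^ d = (w.2 + 1) ^ d - w.2 ^ d} := by
  rw [card_sum_eq_zero_fin_four (· ^ d), Fintype.sum_eq_add_sum_compl 0,
    sum_congr rfl fun s hs => card_fiber_sum_pow_four hodd (by simpa using hs),
    sum_const, card_compl, card_singleton, smul_eq_mul]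
  congr 1
  rw [filter_true_of_mem fun w _ => by simp [hodd], card_univ, Fintype.card_prod, sq]

end PowerCounts

section Walsh

variable {F : Type*} [Field F] [Fintype F] (ψ : AddChar F ℂ)

def walsh (f : F → F) (a : F) : ℂ := ∑ x, ψ (f x - a * x)

lemma sum_walsh_comp_mul_left_pow (f : F → F) {μ : F} (hμ : μ ≠ 0) (k : ℕ) :
    ∑ a, walsh ψ (fun x => f (μ * x)) a ^ k = ∑ a, walsh ψ f a ^ k := by
  have rescale : ∀ a, walsh ψ (fun x => f (μ * x)) a = walsh ψ f (a * μ⁻¹) := fun a =>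
    Fintype.sum_bijective (μ * ·) (mulLeft_bijective₀ μ hμ) _ _ fun x => by
      rw [mul_assoc, inv_mul_cancel_left₀ hμ]
  simp_rw [rescale]
  exact Fintype.sum_bijective (· * μ⁻¹) (mulRight_bijective₀ _ (inv_ne_zero hμ)) _ _ fun _ => rfl

variable [DecidableEq F]

lemma walsh_zero (hψ : ψ.IsPrimitive) (a : F) :
    walsh ψ (fun _ => 0) a = if a = 0 then (Fintype.card F : ℂ) else 0 := by
  have : ∀ x, (0 : F) - a * x = x * -a := fun x => by ring
  simp only [walsh, this, AddChar.sum_mulShift _ hψ, neg_eq_zero, Nat.cast_ite, Nat.cast_zero]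

theorem sum_sum_walsh_mul_pow (hψ : ψ.IsPrimitive) (f : F → F) (k : ℕ) :
    ∑ c, ∑ a, walsh ψ (fun x => c * f x) a ^ k =
      (Fintype.card F : ℂ) ^ 2 * #{v : Fin k → F | ∑ i, v i = 0 ∧ ∑ i, f (v i) = 0} := by
  have expand : ∀ c a, walsh ψ (fun x => c * f x) a ^ k =
      ∑ v : Fin k → F, ψ (c * ∑ i, f (v i)) * ψ (a * -∑ i, v i) := by
    intro c a
    rw [walsh, sum_pow', Fintype.piFinset_univ]
    refine sum_congr rfl fun v _ => ?_
    rw [← AddChar.map_sum_eq_prod, ← AddChar.map_add_eq_mul, mul_sum, mul_neg, mul_sum,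
      ← sum_neg_distrib, ← sum_add_distrib]
    simp_rw [sub_eq_add_neg]
  simp_rw [expand]
  rw [sum_congr rfl fun c _ => sum_comm, sum_comm]
  simp only [← mul_sum, ← sum_mul, AddChar.sum_mulShift _ hψ, neg_eq_zero, Nat.cast_ite,
    Nat.cast_zero, ite_zero_mul_ite_zero]
  simp only [card_filter, Nat.cast_sum, Nat.cast_ite, Nat.cast_one, Nat.cast_zero, mul_sum,
    mul_ite, mul_one, mul_zero, sq, and_comm]

theorem card_sub_one_mul_sum_walsh_pow (hψ : ψ.IsPrimitive) {d : ℕ}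
    (hd : d.Coprime (Fintype.card F - 1)) {k : ℕ} (hk : k ≠ 0) :
    ((Fintype.card F : ℂ) - 1) * ∑ a, walsh ψ (· ^ d) a ^ k =
      (Fintype.card F : ℂ) ^ 2 * #{v : Fin k → F | ∑ i, v i = 0 ∧ ∑ i, v i ^ d = 0} -
        (Fintype.card F : ℂ) ^ k := by
  have h := sum_sum_walsh_mul_pow ψ hψ (· ^ d) k
  have zero_term : ∑ a, walsh ψ (fun x => 0 * x ^ d) a ^ k = (Fintype.card F : ℂ) ^ k := by
    simp only [zero_mul, walsh_zero ψ hψ, ite_pow, zero_pow hk, sum_ite_eq', mem_univ, if_true]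
  have unit_terms : ∀ c ∈ ({0}ᶜ : Finset F),
      ∑ a, walsh ψ (fun x => c * x ^ d) a ^ k = ∑ a, walsh ψ (· ^ d) a ^ k := by
    intro c hc
    obtain ⟨μ, rfl⟩ := exists_units_pow_eq_of_coprime hd (by simpa using hc)
    simpa only [mul_pow] using sum_walsh_comp_mul_left_pow ψ (· ^ d) μ.ne_zero k
  rw [Fintype.sum_eq_add_sum_compl 0, zero_term, sum_congr rfl unit_terms, sum_const,
    card_compl, card_singleton, nsmul_eq_mul, Nat.cast_sub Fintype.card_pos] at h
  linear_combination h

variable {d : ℕ}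

theorem sum_walsh_pow_three (hψ : ψ.IsPrimitive) (hd₀ : d ≠ 0)
    (hd : d.Coprime (Fintype.card F - 1)) :
    ∑ a, walsh ψ (· ^ d) a ^ 3 =
      (Fintype.card F : ℂ) ^ 2 * #{u : F | (u + 1) ^ d - u ^ d = 1} := by
  have h := card_sub_one_mul_sum_walsh_pow ψ hψ hd three_ne_zero
  rw [card_sum_eq_zero_pow_fin_three hd₀ (neg_pow_of_coprime hd)] at h
  push_cast [Nat.cast_sub Fintype.card_pos] at h
  have hq : (Fintype.card F : ℂ) - 1 ≠ 0 :=
    sub_ne_zero.mpr (by exact_mod_cast (Fintype.one_lt_card (α := F)).ne')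
  exact mul_left_cancel₀ hq (by linear_combination h)

theorem sum_walsh_pow_four (hψ : ψ.IsPrimitive) (hd : d.Coprime (Fintype.card F - 1)) :
    ∑ a, walsh ψ (· ^ d) a ^ 4 =
      (Fintype.card F : ℂ) ^ 2 * ∑ a, (#{u : F | (u + 1) ^ d - u ^ d = a} : ℂ) ^ 2 := by
  have h := card_sub_one_mul_sum_walsh_pow ψ hψ hd four_ne_zero
  rw [card_sum_eq_zero_pow_fin_four (neg_pow_of_coprime hd),
    ← sum_card_fiber_sq fun u : F => (u + 1) ^ d - u ^ d] at h
  push_cast [Nat.cast_sub Fintype.card_pos] at h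
  have hq : (Fintype.card F : ℂ) - 1 ≠ 0 :=
    sub_ne_zero.mpr (by exact_mod_cast (Fintype.one_lt_card (α := F)).ne')
  exact mul_left_cancel₀ hq (by linear_combination h)

end Walsh

/-- Third and fourth power moments of the Walsh transform of `Tr(x^d)` in terms
of `M_a = #{x : (x+1)^d - x^d = a}`. -/
theorem walsh_third_fourth_moments (p n : ℕ) [Fact p.Prime] (hn : 1 ≤ n)
    (d : ℕ) (hd : 0 < d) (hgcd : Nat.gcd d (p ^ n - 1) = 1) :
    (∑ a : GaloisField p n,
        (∑ x : GaloisField p n, ew p (Tr p n (x ^ d - a * x))) ^ 3)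
      = (p : ℂ) ^ (2 * n) *
          (Nat.card {x : GaloisField p n // (x + 1) ^ d - x ^ d = 1} : ℂ) ∧
    (∑ a : GaloisField p n,
        (∑ x : GaloisField p n, ew p (Tr p n (x ^ d - a * x))) ^ 4)
      = (p : ℂ) ^ (2 * n) *
          ∑ a : GaloisField p n,
            (Nat.card {x : GaloisField p n // (x + 1) ^ d - x ^ d = a} : ℂ) ^ 2 := by
  classical
  have : NeZero p := ⟨(Fact.out : p.Prime).ne_zero⟩
  have hq : Fintype.card (GaloisField p n) = p ^ n := by
    rw [← Nat.card_eq_fintype_card, GaloisField.card p n (by omega)]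
  let ψ := ZMod.stdAddChar.compAddMonoidHom
    (Algebra.trace (ZMod p) (GaloisField p n)).toAddMonoidHom
  have hψ : ψ.IsPrimitive := (ZMod.isPrimitive_stdAddChar p).compTrace
  have hW : ∀ a, ∑ x, ew p (Tr p n (x ^ d - a * x)) = walsh ψ (· ^ d) a := fun a =>
    sum_congr rfl fun x _ => ew_eq_stdAddChar p _
  have hM : ∀ a, Nat.card {x : GaloisField p n // (x + 1) ^ d - x ^ d = a} =
      #{x | (x + 1) ^ d - x ^ d = a} := fun a => by
    rw [Nat.card_eq_fintype_card, Fintype.card_subtype]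
  have hp : (p : ℂ) ^ (2 * n) = (Fintype.card (GaloisField p n) : ℂ) ^ 2 := by
    rw [hq]
    push_cast
    ring
  have hcop : d.Coprime (Fintype.card (GaloisField p n) - 1) := by rwa [hq]
  simp only [hW, hM, hp]
  exact ⟨sum_walsh_pow_three ψ hψ hd.ne' hcop, sum_walsh_pow_four ψ hψ hcop⟩
end

section
/- Let n = 2m and d = 4(2^m − 1) + 1. Then gcd(d, 2^n − 1) = 1 if and only if gcd(7, 2^m + 1) = 1, and the polynomial arising from the Niho reduction is g_a(x) = x⁷ + a x⁴ + ā x³ + 1, which is self-conjugate-reciprocal: g_a(x) = 0 if and only if g_a(1/x̄) = 0 for x ≠ 0, where x̄ = x^{2^m}. -/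
instance : Fact (Nat.Prime 2) := ⟨Nat.prime_two⟩

/-!
Since `2^(2m) - 1 = (2^m - 1)(2^m + 1)` and `4 (2^m - 1) + 1` is `1` modulo `2^m - 1` and `-7`
modulo `2^m + 1`, the gcd condition reduces to `gcd(7, 2^m + 1) = 1`.

Conjugation `σ x = x^(2^m)` is a ring endomorphism with `σ (σ a) = a`, so applying it to
`g_a(x)` gives `X⁷ + ā X⁴ + a X³ + 1 = X⁷ g_a(1/X)` with `X = x̄`; as `σ` is injective and
`X ≠ 0`, `g_a(x) = 0 ↔ g_a(1/x̄) = 0`.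
-/

section Arithmetic

theorem Nat.coprime_four_mul_sub_one_add_one_sub_one (t : ℕ) :
    Nat.Coprime (4 * (t - 1) + 1) (t - 1) := by
  simp only [Nat.coprime_mul_right_add_left, Nat.coprime_one_left_eq_true]

theorem Nat.coprime_four_mul_sub_one_add_one_add_one_iff {t : ℕ} (ht : 1 ≤ t) :
    Nat.Coprime (4 * (t - 1) + 1) (t + 1) ↔ Nat.Coprime 7 (t + 1) := by
  rw [← Nat.isCoprime_iff_coprime, ← Nat.isCoprime_iff_coprime,
    show ((4 * (t - 1) + 1 : ℕ) : ℤ) = -7 + ((t + 1 : ℕ) : ℤ) * 4 by omega,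
    IsCoprime.add_mul_left_left_iff, IsCoprime.neg_left_iff, Nat.cast_ofNat]

theorem Nat.two_pow_two_mul_sub_one (m : ℕ) :
    2 ^ (2 * m) - 1 = (2 ^ m - 1) * (2 ^ m + 1) := by
  rw [pow_mul', ← one_pow 2, Nat.sq_sub_sq, one_pow, mul_comm]

theorem Nat.coprime_niho_exponent_iff (m : ℕ) :
    Nat.Coprime (4 * (2 ^ m - 1) + 1) (2 ^ (2 * m) - 1) ↔ Nat.Coprime 7 (2 ^ m + 1) := by
  rw [Nat.two_pow_two_mul_sub_one, Nat.coprime_mul_iff_right,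
    Nat.coprime_four_mul_sub_one_add_one_add_one_iff Nat.one_le_two_pow,
    and_iff_right (Nat.coprime_four_mul_sub_one_add_one_sub_one _)]

end Arithmetic

section ConjugateReciprocal

variable {K : Type*} [Field K]

/-- The paper's `g_a` is `nihoPoly a ā`. -/
def nihoPoly (a b y : K) : K :=
  y ^ 7 + a * y ^ 4 + b * y ^ 3 + 1

theorem pow_seven_mul_nihoPoly_one_div {y : K} (hy : y ≠ 0) (a b : K) :
    y ^ 7 * nihoPoly a b (1 / y) = nihoPoly b a y := by
  unfold nihoPoly
  field_simp
  ring

theorem map_nihoPoly (σ : K →+* K) {a : K} (ha : σ (σ a) = a) (x : K) :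
    σ (nihoPoly a (σ a) x) = nihoPoly (σ a) a (σ x) := by
  simp only [nihoPoly, map_add, map_mul, map_pow, map_one, ha]

theorem nihoPoly_eq_zero_iff_one_div (σ : K →+* K) {a x : K} (ha : σ (σ a) = a) (hx : x ≠ 0) :
    nihoPoly a (σ a) x = 0 ↔ nihoPoly a (σ a) (1 / σ x) = 0 := by
  have hσx : σ x ≠ 0 := (map_ne_zero σ).mpr hx
  rw [← map_eq_zero_iff σ σ.injective, map_nihoPoly σ ha, ← pow_seven_mul_nihoPoly_one_div hσx,
    mul_eq_zero, or_iff_right (pow_ne_zero _ hσx)]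

end ConjugateReciprocal

theorem niho_four_scr_general (m : ℕ) :
    (Nat.gcd (4 * (2 ^ m - 1) + 1) (2 ^ (2 * m) - 1) = 1 ↔
      Nat.gcd 7 (2 ^ m + 1) = 1) ∧
    (∀ a x : GaloisField 2 (4 * m), a ^ (2 ^ (2 * m)) = a → x ≠ 0 →
      (x ^ 7 + a * x ^ 4 + a ^ (2 ^ m) * x ^ 3 + 1 = 0 ↔
        (1 / x ^ (2 ^ m)) ^ 7 + a * (1 / x ^ (2 ^ m)) ^ 4
          + a ^ (2 ^ m) * (1 / x ^ (2 ^ m)) ^ 3 + 1 = 0)) := by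
  refine ⟨Nat.coprime_niho_exponent_iff m, fun a x ha hx => ?_⟩
  have hconj : (a ^ 2 ^ m) ^ 2 ^ m = a := by rwa [← pow_mul, ← pow_add, ← two_mul]
  exact nihoPoly_eq_zero_iff_one_div (iterateFrobenius _ 2 m) hconj hx

/-- For `d = 4(2^m - 1) + 1` and `n = 2m`: `gcd(d, 2^n - 1) = 1` iff
`gcd(7, 2^m + 1) = 1`; and the Niho polynomial `g_a(x) = x⁷ + a x⁴ + ā x³ + 1`
is self-conjugate-reciprocal: for nonzero `x` (in `F_{2^{2n}}`, with
conjugation `x̄ = x^{2^m}`), `g_a(x) = 0` iff `g_a(1/x̄) = 0`. -/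
theorem niho_four_scr (m : ℕ) (hm : 1 ≤ m) :
    (Nat.gcd (4 * (2 ^ m - 1) + 1) (2 ^ (2 * m) - 1) = 1 ↔
      Nat.gcd 7 (2 ^ m + 1) = 1) ∧
    (∀ a x : GaloisField 2 (4 * m), a ^ (2 ^ (2 * m)) = a → x ≠ 0 →
      (x ^ 7 + a * x ^ 4 + a ^ (2 ^ m) * x ^ 3 + 1 = 0 ↔
        (1 / x ^ (2 ^ m)) ^ 7 + a * (1 / x ^ (2 ^ m)) ^ 4
          + a ^ (2 ^ m) * (1 / x ^ (2 ^ m)) ^ 3 + 1 = 0)) :=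
  niho_four_scr_general m
end
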